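/- arXiv:2511.23443 — 7 statements merged into one kernel-verified Lean document; each statement's English description precedes it below -/
import Mathlib

section
/- For every pair of integers m ≥ 2 and p ≥ 2, there exist matrices W ∈ ℝ^{2×p} and V ∈ ℝ^{p×2} such that the two-layer sine network s(x) = V·sin(Wx) exactly realizes modular addition on X_m: for every x ∈ X_m, the score s_{y(x)}(x) is strictly greater than s_k(x) for every k ≠ y(x) (so the unique-argmax predictor outputs y(x)); moreover one can take s_q(x) = cos((2π/p)(y(x) − q)) for all q, so the margin min_x ( s_{y(x)}(x) − max_{q ≠ y(x)} s_q(x) ) equals 1 − cos(2π/p) ≥ 8/p². -/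
/-!
Token `r` is sent to the angle `2πr/p`, so the first neuron computes `sin (2πn/p)` for
`n = ∑ r x_r`. The second neuron adds the phase `π/(2m)` per token, `π/2` in total since
`∑ x_r = m`, and so computes `cos (2πn/p)`. Reading out with the unit vector at angle `2πq/p`
gives the score `cos (2π(n - q)/p)`, which depends only on `n mod p`: it equals `1` at the label
and at most `cos (2π/p)` elsewhere. Jordan's inequality `cos x ≤ 1 - 2x²/π²` on `[-π, π]`
bounds the margin `1 - cos (2π/p)` below by `8/p²`.
-/

/-- Score of a two-layer sine network on a bag-of-tokens input. -/
noncomputable def sineScore {p d : ℕ} (W : Fin d → Fin p → ℝ) (V : Fin p → Fin d → ℝ)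
    (x : Fin p → ℕ) (q : Fin p) : ℝ :=
  ∑ j, V q j * Real.sin (∑ r, W j r * (x r : ℝ))

/-- Label of a bag-of-tokens vector: (∑ r, r · x_r) mod p. -/
def lab (p : ℕ) (x : Fin p → ℕ) : ℕ := (∑ r : Fin p, (r : ℕ) * x r) % p

open Real

lemma cos_le_cos_of_le_of_le_two_pi_sub {θ t : ℝ} (hθ₀ : 0 ≤ θ) (h₁ : θ ≤ t)
    (h₂ : t ≤ 2 * π - θ) : cos t ≤ cos θ := by
  rcases le_or_gt t π with ht | ht
  · exact cos_le_cos_of_nonneg_of_le_pi hθ₀ ht h₁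
  · rw [← cos_two_pi_sub]
    exact cos_le_cos_of_nonneg_of_le_pi hθ₀ (by linarith) (by linarith)

lemma cos_two_pi_div_mul_eq_of_modEq (p : ℕ) {a b : ℤ} (h : a ≡ b [ZMOD p]) :
    cos (2 * π / p * a) = cos (2 * π / p * b) := by
  rcases eq_or_ne p 0 with rfl | hp
  · simp
  obtain ⟨k, hk⟩ := h.dvd
  have hb : (b : ℝ) = a + p * k := by rw [← sub_eq_iff_eq_add']; exact_mod_cast hk
  rw [hb, mul_add, ← mul_assoc, div_mul_cancel₀ _ (by exact_mod_cast hp), mul_comm _ (k : ℝ),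
    cos_add_int_mul_two_pi]

lemma cos_two_pi_div_mul_le_of_not_dvd (p : ℕ) {a : ℤ} (h : ¬ (p : ℤ) ∣ a) :
    cos (2 * π / p * a) ≤ cos (2 * π / p) := by
  rcases eq_or_ne p 0 with rfl | hp
  · simp
  set r := a % p
  have hr₀ : 0 < r := lt_of_le_of_ne (Int.emod_nonneg _ (by exact_mod_cast hp))
    (fun h' => h (Int.dvd_of_emod_eq_zero h'.symm))
  have hrp : r < p := Int.emod_lt_of_pos _ (by omega)
  have hr₁ : (1 : ℝ) ≤ r := by exact_mod_cast hr₀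
  have hr₂ : (r : ℝ) ≤ p - 1 := by
    have : r ≤ (p : ℤ) - 1 := by omega
    exact_mod_cast this
  have hθp : 2 * π / p * p = 2 * π := div_mul_cancel₀ _ (by positivity)
  have hθ₀ : 0 ≤ 2 * π / p := by positivity
  rw [cos_two_pi_div_mul_eq_of_modEq p (Int.mod_modEq a p).symm]
  apply cos_le_cos_of_le_of_le_two_pi_sub hθ₀
  · nlinarith
  · nlinarith

lemma eight_div_sq_le_one_sub_cos_two_pi_div {p : ℝ} (hp : 2 ≤ p) :
    8 / p ^ 2 ≤ 1 - cos (2 * π / p) := by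
  have hθ : |2 * π / p| ≤ π := by
    rw [abs_of_nonneg (by positivity), div_le_iff₀ (by positivity)]
    nlinarith [pi_pos]
  have h := cos_le_one_sub_mul_cos_sq hθ
  have : 2 / π ^ 2 * (2 * π / p) ^ 2 = 8 / p ^ 2 := by field_simp; ring
  linarith

noncomputable def rotationWeights (p : ℕ) (θ c : ℝ) : Fin 2 → Fin p → ℝ :=
  ![fun r => θ * (r : ℕ), fun r => θ * (r : ℕ) + c]

noncomputable def rotationReadout (p : ℕ) (θ : ℝ) : Fin p → Fin 2 → ℝ :=
  fun q => ![sin (θ * (q : ℕ)), cos (θ * (q : ℕ))]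

lemma sineScore_rotation {p : ℕ} (θ c : ℝ) (x : Fin p → ℕ)
    (hc : c * ∑ r, (x r : ℝ) = π / 2) (q : Fin p) :
    sineScore (rotationWeights p θ c) (rotationReadout p θ) x q =
      cos (θ * (((∑ r : Fin p, (r : ℕ) * x r : ℕ) : ℝ) - (q : ℕ))) := by
  set n : ℕ := ∑ r : Fin p, (r : ℕ) * x r
  have h₀ : ∑ r : Fin p, θ * (r : ℕ) * (x r : ℝ) = θ * n := by
    simp only [n, Nat.cast_sum, Nat.cast_mul, Finset.mul_sum, mul_assoc]
  have h₁ : ∑ r : Fin p, (θ * (r : ℕ) + c) * (x r : ℝ) = θ * n + π / 2 := by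
    rw [← h₀]
    simp only [add_mul, Finset.sum_add_distrib, ← Finset.mul_sum, hc]
  simp only [sineScore, rotationWeights, rotationReadout, Fin.sum_univ_two, Matrix.cons_val_zero,
    Matrix.cons_val_one, h₀, h₁, sin_add_pi_div_two, mul_sub, cos_sub]
  ring

lemma sineScore_rotation_eq_cos_lab {m p : ℕ} (hm : m ≠ 0) (x : Fin p → ℕ) (hx : ∑ r, x r = m)
    (q : Fin p) :
    sineScore (rotationWeights p (2 * π / p) (π / (2 * m))) (rotationReadout p (2 * π / p)) x q =
      cos (2 * π / p * ((lab p x : ℝ) - (q : ℕ))) := by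
  have hc : π / (2 * m) * ∑ r, (x r : ℝ) = π / 2 := by
    rw [← Nat.cast_sum, hx]
    field_simp
  have hmod :
      ((lab p x : ℕ) : ℤ) - (q : ℕ) ≡ (∑ r : Fin p, (r : ℕ) * x r : ℕ) - (q : ℕ) [ZMOD p] :=
    (Int.natCast_modEq_iff.2 (Nat.mod_modEq _ p)).sub_right _
  rw [sineScore_rotation _ _ x hc]
  exact_mod_cast (cos_two_pi_div_mul_eq_of_modEq p hmod).symm

lemma cos_two_pi_div_mul_sub_le {p : ℕ} {k ℓ : Fin p} (hk : k ≠ ℓ) :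
    cos (2 * π / p * (((ℓ : ℕ) : ℝ) - (k : ℕ))) ≤ cos (2 * π / p) := by
  have hndvd : ¬ (p : ℤ) ∣ (ℓ : ℕ) - (k : ℕ) := fun hdvd =>
    hk (Fin.ext (by have := Int.eq_zero_of_abs_lt_dvd hdvd (by rw [abs_lt]; omega); omega))
  exact_mod_cast cos_two_pi_div_mul_le_of_not_dvd p hndvd

theorem sine_low_width_construction (m p : ℕ) (hm : 2 ≤ m) (hp : 2 ≤ p) :
    ∃ (W : Fin 2 → Fin p → ℝ) (V : Fin p → Fin 2 → ℝ),
      (∀ x : Fin p → ℕ, (∑ r, x r) = m →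
        (∀ q : Fin p, sineScore W V x q =
            Real.cos (2 * Real.pi / p * ((lab p x : ℝ) - ((q : ℕ) : ℝ)))) ∧
        ∃ ℓ : Fin p, (ℓ : ℕ) = lab p x ∧
          (∀ k : Fin p, k ≠ ℓ → sineScore W V x k < sineScore W V x ℓ) ∧
          (∀ k : Fin p, k ≠ ℓ →
            1 - Real.cos (2 * Real.pi / p) ≤ sineScore W V x ℓ - sineScore W V x k)) ∧
      8 / (p : ℝ) ^ 2 ≤ 1 - Real.cos (2 * Real.pi / p) := by
  have hmargin : 8 / (p : ℝ) ^ 2 ≤ 1 - cos (2 * π / p) :=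
    eight_div_sq_le_one_sub_cos_two_pi_div (by exact_mod_cast hp)
  refine ⟨rotationWeights p (2 * π / p) (π / (2 * m)), rotationReadout p (2 * π / p),
    fun x hx => ?_, hmargin⟩
  have hscore := sineScore_rotation_eq_cos_lab (by omega) x hx
  let ℓ : Fin p := ⟨lab p x, Nat.mod_lt _ (by omega)⟩
  have hgap (k : Fin p) (hk : k ≠ ℓ) : 1 - cos (2 * π / p) ≤ cos (2 * π / p * 0) -
      cos (2 * π / p * ((lab p x : ℝ) - (k : ℕ))) := by
    rw [mul_zero, cos_zero]
    linarith [cos_two_pi_div_mul_sub_le hk]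
  refine ⟨hscore, ℓ, rfl, fun k hk => ?_, fun k hk => ?_⟩ <;> rw [hscore, hscore, sub_self]
  · linarith [hgap k hk, show 0 < 8 / (p : ℝ) ^ 2 by positivity]
  · exact hgap k hk
end

section
/- For every integer p ≥ 2 there exist matrices W ∈ ℝ^{2×p}, V ∈ ℝ^{p×2} and a bias vector b ∈ ℝ² such that the width-2 sine network with bias s(x) = V·sin(Wx + b) exactly realizes modular addition uniformly over all lengths: for every m ≥ 2 and every x ∈ X_m, s_{y(x)}(x) > s_k(x) for all k ≠ y(x); in fact one can take s_q(x) = cos((2π/p)(y(x) − q)) for all q ∈ [p]. -/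
/-- Score of a two-layer sine network with first-layer bias on a bag-of-tokens input. -/
noncomputable def sineScoreB {p d : ℕ} (W : Fin d → Fin p → ℝ) (V : Fin p → Fin d → ℝ)
    (b : Fin d → ℝ) (x : Fin p → ℕ) (q : Fin p) : ℝ :=
  ∑ j, V q j * Real.sin ((∑ r, W j r * (x r : ℝ)) + b j)

/-!
With frequency `θ = 2π/p`, the first neuron computes `sin (θ N)` and, thanks to the bias `π/2`,
the second computes `cos (θ N)`, where `N = ∑ r x_r`. Reading out with `(sin (θ q), cos (θ q))`
gives `cos (θ (N - q))` by the subtraction formula, and since `θ p = 2π` this depends on `N` only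
through `N mod p`. For distinct residues `a, b < p` the angle `θ (a - b)` lies strictly between
`-2π` and `2π` and is nonzero, so its cosine is below `1 = cos 0`.
-/

open Real

noncomputable def rotationW (p : ℕ) (θ : ℝ) : Fin 2 → Fin p → ℝ := fun _ r => θ * (r : ℕ)

noncomputable def rotationV (p : ℕ) (θ : ℝ) : Fin p → Fin 2 → ℝ :=
  fun q => ![sin (θ * (q : ℕ)), cos (θ * (q : ℕ))]

noncomputable def rotationBias : Fin 2 → ℝ := ![0, π / 2]

lemma sineScoreB_rotation {p : ℕ} (θ : ℝ) (x : Fin p → ℕ) (q : Fin p) :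
    sineScoreB (rotationW p θ) (rotationV p θ) rotationBias x q =
      cos (θ * (((∑ r : Fin p, (r : ℕ) * x r : ℕ) : ℝ) - (q : ℕ))) := by
  have hsum : ∑ r : Fin p, θ * (r : ℕ) * (x r : ℝ) = θ * (∑ r : Fin p, (r : ℕ) * x r : ℕ) := by
    push_cast
    rw [Finset.mul_sum]
    exact Finset.sum_congr rfl fun r _ => mul_assoc _ _ _
  simp only [sineScoreB, rotationW, rotationV, rotationBias, Fin.sum_univ_two,
    Matrix.cons_val_zero, Matrix.cons_val_one, hsum, add_zero, sin_add_pi_div_two, mul_sub, cos_sub]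
  ring

lemma cos_two_pi_div_mul_natCast_mod_sub (p N : ℕ) (a : ℝ) :
    cos (2 * π / p * ((N : ℝ) - a)) = cos (2 * π / p * (((N % p : ℕ) : ℝ) - a)) := by
  rcases p.eq_zero_or_pos with rfl | hp
  · rw [Nat.mod_zero]
  have hN : (N : ℝ) = p * (N / p : ℕ) + (N % p : ℕ) := by exact_mod_cast (Nat.div_add_mod N p).symm
  calc cos (2 * π / p * ((N : ℝ) - a))
      = cos (2 * π / p * (((N % p : ℕ) : ℝ) - a) + (N / p : ℕ) * (2 * π)) := by
        rw [hN]
        field_simp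
        ring_nf
    _ = cos (2 * π / p * (((N % p : ℕ) : ℝ) - a)) := cos_add_nat_mul_two_pi _ _

lemma cos_two_pi_div_mul_sub_lt_one {p a b : ℕ} (ha : a < p) (hb : b < p) (hab : a ≠ b) :
    cos (2 * π / p * ((a : ℝ) - b)) < 1 := by
  have hp : (0 : ℝ) < p := by exact_mod_cast ha.pos
  have ha' : (a : ℝ) < p := by exact_mod_cast ha
  have hb' : (b : ℝ) < p := by exact_mod_cast hb
  have hθ : 0 < 2 * π / p := by positivity
  have hlo : -(2 * π) < 2 * π / p * ((a : ℝ) - b) := by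
    calc -(2 * π) = 2 * π / p * -p := by field_simp
      _ < 2 * π / p * ((a : ℝ) - b) := by gcongr; linarith [b.cast_nonneg (α := ℝ)]
  have hhi : 2 * π / p * ((a : ℝ) - b) < 2 * π := by
    calc 2 * π / p * ((a : ℝ) - b) < 2 * π / p * p := by gcongr; linarith [a.cast_nonneg (α := ℝ)]
      _ = 2 * π := by field_simp
  refine (cos_le_one _).lt_of_ne fun h => hab ?_
  rw [cos_eq_one_iff_of_lt_of_lt hlo hhi, mul_eq_zero, sub_eq_zero] at h
  exact_mod_cast h.resolve_left hθ.ne'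

theorem sine_uniform_in_length_with_bias (p : ℕ) (hp : 2 ≤ p) :
    ∃ (W : Fin 2 → Fin p → ℝ) (V : Fin p → Fin 2 → ℝ) (b : Fin 2 → ℝ),
      ∀ m : ℕ, 2 ≤ m → ∀ x : Fin p → ℕ, (∑ r, x r) = m →
        (∀ q : Fin p, sineScoreB W V b x q =
            Real.cos (2 * Real.pi / p * ((lab p x : ℝ) - ((q : ℕ) : ℝ)))) ∧
        ∃ ℓ : Fin p, (ℓ : ℕ) = lab p x ∧
          ∀ k : Fin p, k ≠ ℓ → sineScoreB W V b x k < sineScoreB W V b x ℓ := by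
  refine ⟨rotationW p (2 * π / p), rotationV p (2 * π / p), rotationBias, fun _ _ x _ => ?_⟩
  have hscore (q : Fin p) : sineScoreB (rotationW p (2 * π / p)) (rotationV p (2 * π / p))
      rotationBias x q = cos (2 * π / p * ((lab p x : ℝ) - (q : ℕ))) := by
    rw [sineScoreB_rotation (2 * π / p), cos_two_pi_div_mul_natCast_mod_sub, lab]
  have hlab : lab p x < p := Nat.mod_lt _ (by omega)
  refine ⟨hscore, ⟨lab p x, hlab⟩, rfl, fun k hk => ?_⟩
  rw [hscore, hscore, sub_self, mul_zero, cos_zero]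
  exact cos_two_pi_div_mul_sub_lt_one hlab k.isLt fun h => hk (Fin.ext h.symm)
end

section
/- Let p ≥ 3 be odd and set K = (p−1)/2. There exist matrices W ∈ ℝ^{K×p} and V ∈ ℝ^{p×K} (explicitly W_{k,r} = (2πk/p)·r and V_{ℓ,k} = sin((2πk/p)·ℓ)) such that, for every length m ≥ 2 and every x ∈ X_m with y(x) ≢ 0 (mod p), the sine network scores s(x) = V·sin(Wx) satisfy s_{y(x)}(x) = p/4, s_ℓ(x) = −p/4 for the unique ℓ ≡ −y(x) (mod p), and s_ℓ(x) = 0 for all other ℓ; consequently the unique-argmax predictor outputs y(x) on every x with y(x) ≠ 0, i.e., the network is correct on all inputs except those whose label is the residue 0. -/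
open Real Finset

section
variable {p K : ℕ}

def weightSum (x : Fin p → ℕ) : ℕ := ∑ r : Fin p, (r : ℕ) * x r

variable (p K) in
noncomputable def fourierW : Fin K → Fin p → ℝ := fun k r =>
  2 * π * ((k : ℕ) + 1) / p * (r : ℕ)

variable (p K) in
noncomputable def fourierV : Fin p → Fin K → ℝ := fun q k =>
  sin (2 * π * ((k : ℕ) + 1) / p * (q : ℕ))

theorem sum_cos_two_pi_mul_div_of_dvd {a : ℤ} (ha : (p : ℤ) ∣ a) (hp : p ≠ 0) :
    ∑ k : Fin K, cos (2 * π * ((k : ℕ) + 1) / p * a) = K := by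
  obtain ⟨t, rfl⟩ := ha
  have hp' : (p : ℝ) ≠ 0 := by exact_mod_cast hp
  have hterm (k : Fin K) : cos (2 * π * ((k : ℕ) + 1) / p * (p * t)) = 1 := by
    convert cos_int_mul_two_pi (((k : ℕ) + 1 : ℕ) * t) using 2
    push_cast
    field_simp
  push_cast
  simp [hterm]

theorem sum_cos_two_pi_mul_div_of_not_dvd (hp : p = 2 * K + 1) {a : ℤ} (ha : ¬(p : ℤ) ∣ a) :
    ∑ k : Fin K, cos (2 * π * ((k : ℕ) + 1) / p * a) = -(1 / 2) := by
  set θ : ℝ := 2 * π * a / p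
  have hp' : (p : ℝ) = 2 * K + 1 := by exact_mod_cast hp
  have hp0 : (p : ℝ) ≠ 0 := by rw [hp']; positivity
  have hsin : sin (θ / 2) ≠ 0 := by
    refine sin_ne_zero_iff.mpr fun n hn => ha ⟨n, ?_⟩
    have : (a : ℝ) = p * n := by
      simp only [θ] at hn; field_simp at hn; linarith
    exact_mod_cast this
  have hangle : (K : ℝ) * θ / 2 + ((K - 1) * θ / 2 + θ) = a * π := by
    simp only [θ]; rw [hp']; field_simp; ring
  -- Dirichlet-kernel telescoping: since `p = 2K + 1`, the closing angle `(2K + 1)θ / 2` is `aπ`.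
  have key : 2 * sin (θ / 2) * ∑ k ∈ range K, cos (θ * k + θ) = -sin (θ / 2) :=
    calc 2 * sin (θ / 2) * ∑ k ∈ range K, cos (θ * k + θ)
        = 2 * sin (K * θ / 2) * cos ((K - 1) * θ / 2 + θ) := by
          rw [mul_assoc, sin_mul_sum_cos, mul_assoc]
      _ = sin (-(θ / 2)) + sin (a * π) := by rw [two_mul_sin_mul_cos, ← hangle]; ring_nf
      _ = -sin (θ / 2) := by rw [sin_neg, sin_int_mul_pi, add_zero]
  have hrange : ∑ k ∈ range K, cos (θ * k + θ) = -(1 / 2) :=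
    mul_left_cancel₀ hsin (by linarith)
  rw [Fin.sum_univ_eq_sum_range (fun k : ℕ => cos (2 * π * (k + 1) / p * a)), ← hrange]
  exact sum_congr rfl fun k _ => by simp only [θ]; ring_nf

theorem sineScore_of_frequencies {d : ℕ} (ω : Fin d → ℝ) (x : Fin p → ℕ) (ℓ : Fin p) :
    sineScore (fun k r => ω k * (r : ℕ)) (fun q k => sin (ω k * (q : ℕ))) x ℓ =
      (∑ k, cos (ω k * (((ℓ : ℕ) - weightSum x : ℤ) : ℝ))
        - ∑ k, cos (ω k * (((ℓ : ℕ) + weightSum x : ℤ) : ℝ))) / 2 := by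
  simp only [sineScore]
  rw [← sum_sub_distrib, sum_div]
  refine sum_congr rfl fun k _ => ?_
  have hinner : ∑ r : Fin p, ω k * (r : ℕ) * (x r : ℝ) = ω k * (weightSum x : ℝ) := by
    simp only [weightSum]; push_cast; rw [mul_sum]; exact sum_congr rfl fun r _ => by ring
  rw [hinner, Int.cast_sub, Int.cast_add, mul_sub, mul_add, ← two_mul_sin_mul_sin]
  push_cast
  ring

theorem natCast_dvd_natCast_sub_iff_eq_mod {ℓ S : ℕ} (hℓ : ℓ < p) :
    (p : ℤ) ∣ (ℓ : ℤ) - S ↔ ℓ = S % p := by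
  rw [← Nat.modEq_iff_dvd, Nat.ModEq, Nat.mod_eq_of_lt hℓ, eq_comm]

theorem natCast_dvd_natCast_add_iff_add_mod_eq_zero {ℓ S : ℕ} :
    (p : ℤ) ∣ (ℓ : ℤ) + S ↔ (ℓ + S % p) % p = 0 := by
  rw [Nat.add_mod_mod, ← Nat.dvd_iff_mod_eq_zero]
  exact_mod_cast Iff.rfl

theorem add_self_mod_ne_zero_of_odd {L : ℕ} (hp : Odd p) (hL : L < p) (h0 : L ≠ 0) :
    (L + L) % p ≠ 0 := by
  intro h
  have h2L : p ∣ 2 * L := two_mul L ▸ Nat.dvd_of_mod_eq_zero h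
  exact h0 (Nat.eq_zero_of_dvd_of_lt ((Nat.coprime_two_right.mpr hp).dvd_of_dvd_mul_left h2L) hL)

theorem sineScore_fourier (hp : p = 2 * K + 1) (x : Fin p → ℕ) (ℓ : Fin p) :
    sineScore (fourierW p K) (fourierV p K) x ℓ =
      ((if (ℓ : ℕ) = lab p x then (K : ℝ) else -(1 / 2)) -
        (if ((ℓ : ℕ) + lab p x) % p = 0 then (K : ℝ) else -(1 / 2))) / 2 := by
  have hcos (a : ℤ) : ∑ k : Fin K, cos (2 * π * ((k : ℕ) + 1) / p * a) =
      if (p : ℤ) ∣ a then (K : ℝ) else -(1 / 2) := by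
    split_ifs with h
    exacts [sum_cos_two_pi_mul_div_of_dvd h (by omega), sum_cos_two_pi_mul_div_of_not_dvd hp h]
  unfold fourierW fourierV
  rw [sineScore_of_frequencies (fun k : Fin K => 2 * π * ((k : ℕ) + 1) / p), hcos, hcos]
  simp only [natCast_dvd_natCast_sub_iff_eq_mod ℓ.isLt,
    natCast_dvd_natCast_add_iff_add_mod_eq_zero]
  rfl
end

theorem sine_length_agnostic_odd_general (p : ℕ) (hodd : Odd p) :
    ∃ (W : Fin ((p - 1) / 2) → Fin p → ℝ) (V : Fin p → Fin ((p - 1) / 2) → ℝ),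
      (∀ k r, W k r = 2 * Real.pi * ((k : ℕ) + 1) / p * ((r : ℕ) : ℝ)) ∧
      (∀ ℓ k, V ℓ k = Real.sin (2 * Real.pi * ((k : ℕ) + 1) / p * ((ℓ : ℕ) : ℝ))) ∧
      ∀ m : ℕ, 2 ≤ m → ∀ x : Fin p → ℕ, (∑ r, x r) = m → lab p x ≠ 0 →
        (∀ ℓ : Fin p, (ℓ : ℕ) = lab p x → sineScore W V x ℓ = p / 4) ∧
        (∀ ℓ : Fin p, ((ℓ : ℕ) + lab p x) % p = 0 → sineScore W V x ℓ = -(p / 4)) ∧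
        (∀ ℓ : Fin p, (ℓ : ℕ) ≠ lab p x → ((ℓ : ℕ) + lab p x) % p ≠ 0 →
            sineScore W V x ℓ = 0) ∧
        ∃ ℓ : Fin p, (ℓ : ℕ) = lab p x ∧
          ∀ k : Fin p, k ≠ ℓ → sineScore W V x k < sineScore W V x ℓ := by
  set K := (p - 1) / 2
  have hK : p = 2 * K + 1 := by obtain ⟨n, rfl⟩ := hodd; omega
  have hpK : (p : ℝ) = 2 * K + 1 := by exact_mod_cast hK
  refine ⟨fourierW p K, fourierV p K, fun _ _ => rfl, fun _ _ => rfl, ?_⟩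
  intro _ _ x _ hL
  have hLp : lab p x < p := Nat.mod_lt _ (by omega)
  have hdistinct := add_self_mod_ne_zero_of_odd hodd hLp hL
  have top (ℓ : Fin p) (h : (ℓ : ℕ) = lab p x) :
      sineScore (fourierW p K) (fourierV p K) x ℓ = p / 4 := by
    rw [sineScore_fourier hK, if_pos h, if_neg (h ▸ hdistinct), hpK]
    ring
  have bottom (ℓ : Fin p) (h : ((ℓ : ℕ) + lab p x) % p = 0) :
      sineScore (fourierW p K) (fourierV p K) x ℓ = -(p / 4) := by
    have hne : (ℓ : ℕ) ≠ lab p x := fun h' => hdistinct (h' ▸ h)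
    rw [sineScore_fourier hK, if_neg hne, if_pos h, hpK]
    ring
  have zero (ℓ : Fin p) (h₁ : (ℓ : ℕ) ≠ lab p x)
      (h₂ : ((ℓ : ℕ) + lab p x) % p ≠ 0) :
      sineScore (fourierW p K) (fourierV p K) x ℓ = 0 := by
    rw [sineScore_fourier hK, if_neg h₁, if_neg h₂, sub_self, zero_div]
  refine ⟨top, bottom, zero, ⟨lab p x, hLp⟩, rfl, fun k hk => ?_⟩
  have hp4 : (0 : ℝ) < p / 4 := by rw [hpK]; positivity
  rw [top ⟨lab p x, hLp⟩ rfl]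
  by_cases h : ((k : ℕ) + lab p x) % p = 0
  · linarith [bottom k h]
  · linarith [zero k (fun h' => hk (Fin.ext h')) h]

theorem sine_length_agnostic_odd (p : ℕ) (hp : 3 ≤ p) (hodd : Odd p) :
    ∃ (W : Fin ((p - 1) / 2) → Fin p → ℝ) (V : Fin p → Fin ((p - 1) / 2) → ℝ),
      (∀ k r, W k r = 2 * Real.pi * ((k : ℕ) + 1) / p * ((r : ℕ) : ℝ)) ∧
      (∀ ℓ k, V ℓ k = Real.sin (2 * Real.pi * ((k : ℕ) + 1) / p * ((ℓ : ℕ) : ℝ))) ∧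
      ∀ m : ℕ, 2 ≤ m → ∀ x : Fin p → ℕ, (∑ r, x r) = m → lab p x ≠ 0 →
        (∀ ℓ : Fin p, (ℓ : ℕ) = lab p x → sineScore W V x ℓ = p / 4) ∧
        (∀ ℓ : Fin p, ((ℓ : ℕ) + lab p x) % p = 0 → sineScore W V x ℓ = -(p / 4)) ∧
        (∀ ℓ : Fin p, (ℓ : ℕ) ≠ lab p x → ((ℓ : ℕ) + lab p x) % p ≠ 0 →
            sineScore W V x ℓ = 0) ∧
        ∃ ℓ : Fin p, (ℓ : ℕ) = lab p x ∧
          ∀ k : Fin p, k ≠ ℓ → sineScore W V x k < sineScore W V x ℓ :=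
  sine_length_agnostic_odd_general p hodd
end

section
/- Let m ≥ 2 and p ≥ 2 be integers and let W ∈ ℝ^{d×p}, V ∈ ℝ^{p×d}. If the two-layer ReLU network s(x) = V·ReLU(Wx) exactly realizes modular addition on X_m — i.e., for every x ∈ X_m the score s_{y(x)}(x) is strictly greater than s_k(x) for all k ≠ y(x) — then the width satisfies d ≥ (m − p)/(p + 2). -/
/-- Score of a two-layer ReLU network on a bag-of-tokens input. -/
noncomputable def reluScore {p d : ℕ} (W : Fin d → Fin p → ℝ) (V : Fin p → Fin d → ℝ)
    (x : Fin p → ℕ) (q : Fin p) : ℝ :=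
  ∑ j, V q j * max (∑ r, W j r * (x r : ℝ)) 0

/-!
Restrict the network to the bags `x_t` with `m - t` copies of token `0` and `t` copies of
token `1`, `0 ≤ t ≤ m`, whose label is `t mod p`. Every pre-activation is affine in `t`, so each
neuron switches on or off at most once, and the number `k(t)` of neurons switched by time `t` is
nondecreasing with values in `[0, d]`. While `k` is constant no neuron switches, so each step adds
the same vector to the scores; since the winner moves from label `t` to label `t + 1`, this vector
strictly increases along the successive labels, which are therefore distinct. Hence
`t ↦ (k(t), t mod p)` is injective on `[0, m]`, and `m + 1 ≤ (d + 1) p`.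
-/

open Finset

def ChangesAtMostOnce (f : ℕ → Bool) : Prop :=
  ∀ ⦃s t u⦄, s ≤ t → t ≤ u → f s = f u → f t = f s

section FlipCount

variable {ι : Type*} [Fintype ι] {σ : ℕ → ι → Bool}

def flipSet (σ : ℕ → ι → Bool) (t : ℕ) : Finset ι := {j | σ t j ≠ σ 0 j}

theorem flipSet_mono (hσ : ∀ j, ChangesAtMostOnce (σ · j)) : Monotone (flipSet σ) := by
  intro s t hst j hj
  simp only [flipSet, mem_filter, mem_univ, true_and] at hj ⊢
  exact fun ht ↦ hj (hσ j (Nat.zero_le s) hst ht.symm)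

theorem eq_of_flipSet_eq {s t : ℕ} (h : flipSet σ s = flipSet σ t) : σ s = σ t := by
  funext j
  have hj := congrArg (j ∈ ·) h
  simp only [flipSet, mem_filter, mem_univ, true_and, eq_iff_iff] at hj
  revert hj
  cases σ s j <;> cases σ t j <;> cases σ 0 j <;> simp

theorem eq_of_card_flipSet_eq (hσ : ∀ j, ChangesAtMostOnce (σ · j)) {t s t' : ℕ}
    (hts : t ≤ s) (hst' : s ≤ t') (hcard : #(flipSet σ t) = #(flipSet σ t')) : σ s = σ t := by
  have hends : flipSet σ t = flipSet σ t' :=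
    eq_of_subset_of_card_le (flipSet_mono hσ (hts.trans hst')) hcard.ge
  refine eq_of_flipSet_eq (Subset.antisymm ?_ (flipSet_mono hσ hts))
  exact hends ▸ flipSet_mono hσ hst'

variable {κ α : Type*} [Preorder α]

theorem ne_of_card_flipSet_eq (hσ : ∀ j, ChangesAtMostOnce (σ · j)) {ℓ : ℕ → κ}
    {c : (ι → Bool) → κ → α} {t t' : ℕ} (htt' : t < t')
    (hslope : ∀ s, t ≤ s → s < t' → σ s = σ (s + 1) → c (σ s) (ℓ s) < c (σ s) (ℓ (s + 1)))
    (hcard : #(flipSet σ t) = #(flipSet σ t')) : ℓ t ≠ ℓ t' := by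
  have hconst : ∀ s ∈ Set.Icc t t', σ s = σ t := fun s hs ↦
    eq_of_card_flipSet_eq hσ hs.1 hs.2 hcard
  have hmono : StrictMonoOn (fun s ↦ c (σ t) (ℓ s)) (Set.Icc t t') := by
    refine strictMonoOn_of_lt_succ Set.ordConnected_Icc fun s _ hs hs' ↦ ?_
    rw [Order.succ_eq_add_one] at hs' ⊢
    have hs_lt : s < t' := hs'.2
    have := hslope s hs.1 hs_lt ((hconst s hs).trans (hconst _ hs').symm)
    rwa [hconst s hs] at this
  intro heq
  exact (hmono ⟨le_rfl, htt'.le⟩ ⟨htt'.le, le_rfl⟩ htt').ne (congrArg (c (σ t)) heq)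

theorem add_one_le_mul_of_slope_lt [Fintype κ] (hσ : ∀ j, ChangesAtMostOnce (σ · j)) (ℓ : ℕ → κ)
    (c : (ι → Bool) → κ → α) (m : ℕ)
    (hslope : ∀ t < m, σ t = σ (t + 1) → c (σ t) (ℓ t) < c (σ t) (ℓ (t + 1))) :
    m + 1 ≤ (Fintype.card ι + 1) * Fintype.card κ := by
  have hinj : Set.InjOn (fun t ↦ (#(flipSet σ t), ℓ t)) (range (m + 1)) := by
    intro t ht t' ht' heq
    simp only [coe_range, Set.mem_Iio, Prod.mk.injEq] at ht ht' heq
    by_contra hne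
    rcases lt_or_gt_of_ne hne with hlt | hlt
    · exact ne_of_card_flipSet_eq hσ hlt (fun s _ hs ↦ hslope s (by omega)) heq.1 heq.2
    · exact ne_of_card_flipSet_eq hσ hlt (fun s _ hs ↦ hslope s (by omega)) heq.1.symm heq.2.symm
  have hmaps : Set.MapsTo (fun t ↦ (#(flipSet σ t), ℓ t)) (range (m + 1))
      (range (Fintype.card ι + 1) ×ˢ univ : Finset (ℕ × κ)) := fun t _ ↦ by
    simpa [Nat.lt_succ_iff] using card_le_univ (flipSet σ t)
  simpa using card_le_card_of_injOn _ hmaps hinj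

end FlipCount

section ReluOnLine

variable {ι κ : Type*} (a b : ι → ℝ) (V : κ → ι → ℝ)

noncomputable def activationPattern (t : ℕ) (j : ι) : Bool := decide (0 ≤ a j + b j * t)

theorem changesAtMostOnce_activationPattern (j : ι) :
    ChangesAtMostOnce (activationPattern a b · j) := by
  intro s t u hst htu hsu
  have hst' : (s : ℝ) ≤ t := by exact_mod_cast hst
  have htu' : (t : ℝ) ≤ u := by exact_mod_cast htu
  simp only [activationPattern, decide_eq_decide] at hsu ⊢
  rcases le_total 0 (b j) with hb | hb
  · constructor
    · intro h; exact hsu.2 (by nlinarith)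
    · intro h; nlinarith
  · constructor
    · intro h; nlinarith
    · intro h; have := hsu.1 h; nlinarith

variable [Fintype ι]

def reluOnLine (t : ℕ) (k : κ) : ℝ := ∑ j, V k j * max (a j + b j * t) 0

def patternSlope (P : ι → Bool) (k : κ) : ℝ := ∑ j, V k j * if P j then b j else 0

theorem reluOnLine_succ {t : ℕ} (h : activationPattern a b t = activationPattern a b (t + 1))
    (k : κ) :
    reluOnLine a b V (t + 1) k =
      reluOnLine a b V t k + patternSlope b V (activationPattern a b t) k := by
  simp only [reluOnLine, patternSlope, activationPattern, decide_eq_true_eq, ← sum_add_distrib,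
    ← mul_add]
  refine sum_congr rfl fun j _ ↦ congrArg (V k j * ·) ?_
  have hj := congrFun h j
  simp only [activationPattern, decide_eq_decide] at hj
  push_cast at hj ⊢
  by_cases h0 : 0 ≤ a j + b j * t
  · rw [if_pos h0, max_eq_left (hj.1 h0), max_eq_left h0]; ring
  · rw [if_neg h0, max_eq_right (not_le.1 (mt hj.2 h0)).le, max_eq_right (not_le.1 h0).le]
    ring

theorem patternSlope_lt {t : ℕ} (h : activationPattern a b t = activationPattern a b (t + 1))
    {u v : κ} (hu : reluOnLine a b V t v < reluOnLine a b V t u)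
    (hv : reluOnLine a b V (t + 1) u < reluOnLine a b V (t + 1) v) :
    patternSlope b V (activationPattern a b t) u <
      patternSlope b V (activationPattern a b t) v := by
  rw [reluOnLine_succ a b V h, reluOnLine_succ a b V h] at hv
  linarith

end ReluOnLine

section TwoTokenBag

variable {p : ℕ} [NeZero p]

def twoTokenBag (m t : ℕ) : Fin p → ℕ := Pi.single 0 (m - t) + Pi.single 1 t

theorem sum_twoTokenBag {m t : ℕ} (ht : t ≤ m) : ∑ r, twoTokenBag (p := p) m t r = m := by
  simp [twoTokenBag, sum_add_distrib, ht]

theorem lab_twoTokenBag (m t : ℕ) : lab p (twoTokenBag m t) = t % p := by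
  simp [lab, twoTokenBag, mul_add, Pi.single_apply, sum_add_distrib]

theorem reluScore_twoTokenBag {d : ℕ} (W : Fin d → Fin p → ℝ) (V : Fin p → Fin d → ℝ) {m t : ℕ}
    (ht : t ≤ m) (k : Fin p) :
    reluScore W V (twoTokenBag m t) k =
      reluOnLine (fun j ↦ W j 0 * m) (fun j ↦ W j 1 - W j 0) V t k := by
  refine sum_congr rfl fun j _ ↦ ?_
  have hpre : ∑ r, W j r * (twoTokenBag m t r : ℝ) = W j 0 * m + (W j 1 - W j 0) * t := by
    simp only [twoTokenBag, Pi.add_apply, Nat.cast_add, mul_add, sum_add_distrib]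
    simp [Pi.single_apply, Nat.cast_sub ht]
    ring
  rw [hpre]

theorem ofNat_ne_ofNat_add_one (hp : 1 < p) (t : ℕ) : Fin.ofNat p t ≠ Fin.ofNat p (t + 1) := by
  intro h
  have h1 : 1 ≡ 0 [MOD p] := Nat.ModEq.add_left_cancel' t (congrArg Fin.val h).symm
  have := Nat.eq_one_of_dvd_one (Nat.modEq_zero_iff_dvd.1 h1)
  omega

end TwoTokenBag

theorem relu_width_lower_bound_general (m p d : ℕ) (hp : 2 ≤ p)
    (W : Fin d → Fin p → ℝ) (V : Fin p → Fin d → ℝ)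
    (hrealize : ∀ x : Fin p → ℕ, (∑ r, x r) = m →
      ∃ ℓ : Fin p, (ℓ : ℕ) = lab p x ∧
        ∀ k : Fin p, k ≠ ℓ → reluScore W V x k < reluScore W V x ℓ) :
    ((m : ℝ) - p) / (p + 2) ≤ d := by
  have : NeZero p := ⟨by omega⟩
  set a : Fin d → ℝ := fun j ↦ W j 0 * m
  set b : Fin d → ℝ := fun j ↦ W j 1 - W j 0
  have hwin : ∀ t ≤ m, ∀ k ≠ Fin.ofNat p t,
      reluOnLine a b V t k < reluOnLine a b V t (Fin.ofNat p t) := by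
    intro t ht k hk
    obtain ⟨ℓ, hℓ, hmax⟩ := hrealize _ (sum_twoTokenBag ht)
    obtain rfl : ℓ = Fin.ofNat p t := Fin.ext (by rw [hℓ, lab_twoTokenBag, Fin.val_ofNat])
    simpa only [reluScore_twoTokenBag W V ht] using hmax k hk
  have hcount := add_one_le_mul_of_slope_lt (changesAtMostOnce_activationPattern a b)
    (Fin.ofNat p) (patternSlope b V) m fun t ht hσ ↦
      have hne := ofNat_ne_ofNat_add_one hp t
      patternSlope_lt a b V hσ (hwin t ht.le _ hne.symm) (hwin (t + 1) ht _ hne)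
  have hcount' : (m : ℝ) + 1 ≤ (d + 1) * p := by
    rw [Fintype.card_fin, Fintype.card_fin] at hcount
    exact_mod_cast hcount
  rw [div_le_iff₀ (by positivity)]
  nlinarith

theorem relu_width_lower_bound (m p d : ℕ) (hm : 2 ≤ m) (hp : 2 ≤ p)
    (W : Fin d → Fin p → ℝ) (V : Fin p → Fin d → ℝ)
    (hrealize : ∀ x : Fin p → ℕ, (∑ r, x r) = m →
      ∃ ℓ : Fin p, (ℓ : ℕ) = lab p x ∧
        ∀ k : Fin p, k ≠ ℓ → reluScore W V x k < reluScore W V x ℓ) :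
    ((m : ℝ) - p) / (p + 2) ≤ d :=
  relu_width_lower_bound_general m p d hp W V hrealize
end

section
/- Let p ≥ 2 and let m₁, m₂ ≥ 1 be integers with m₁ ≢ m₂ (mod p). Then there exist no matrices W ∈ ℝ^{d×p}, V ∈ ℝ^{p×d} (for any width d) such that the two-layer ReLU network s(x) = V·ReLU(Wx) satisfies, for every x ∈ X_{m₁} ∪ X_{m₂}, that s_{y(x)}(x) > s_k(x) for all k ≠ y(x). In particular, the scalings x⁽¹⁾ = m₁·e₀ and x⁽²⁾ = m₂·e₀ lie on a common ray, the ReLU network's prediction is invariant under positive scaling of the input, yet their labels m₁ mod p and m₂ mod p differ, so at least one of them is misclassified. -/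
/- A bias-free ReLU network is positively homogeneous: scaling the input by m ≥ 0 scales every
score by m. So the inputs m₁·e₁ and m₂·e₁ (m copies of token 1) have the same strict argmax,
although their labels m₁ mod p and m₂ mod p differ. -/

open Finset

def IsStrictArgmax {ι α : Type*} [LT α] (s : ι → α) (ℓ : ι) : Prop :=
  ∀ k, k ≠ ℓ → s k < s ℓ

namespace IsStrictArgmax

variable {ι α : Type*} {s : ι → α} {i j : ι}

theorem unique [Preorder α] (hi : IsStrictArgmax s i) (hj : IsStrictArgmax s j) : i = j := by
  by_contra hne
  exact lt_asymm (hi j (Ne.symm hne)) (hj i hne)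

theorem of_mul [Mul α] [Zero α] [Preorder α] [PosMulReflectLT α] {a : α} (ha : 0 ≤ a)
    (h : IsStrictArgmax (fun k => a * s k) i) : IsStrictArgmax s i :=
  fun k hk => lt_of_mul_lt_mul_left (h k hk) ha

end IsStrictArgmax

theorem reluScore_nsmul {p d : ℕ} (W : Fin d → Fin p → ℝ) (V : Fin p → Fin d → ℝ)
    (c : ℕ) (x : Fin p → ℕ) (q : Fin p) :
    reluScore W V (c • x) q = c * reluScore W V x q := by
  have hc : (0 : ℝ) ≤ c := c.cast_nonneg
  simp only [reluScore, mul_sum]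
  refine sum_congr rfl fun j _ => ?_
  have hpre : ∑ r, W j r * ((c • x) r : ℝ) = c * ∑ r, W j r * (x r : ℝ) := by
    simp only [mul_sum, Pi.smul_apply, smul_eq_mul, Nat.cast_mul]
    exact sum_congr rfl fun r _ => by ring
  rw [hpre, mul_left_comm, mul_max_of_nonneg _ _ hc, mul_zero]

theorem lab_single {p : ℕ} (i : Fin p) (m : ℕ) : lab p (Pi.single i m) = (i * m) % p := by
  simp [lab, Pi.single_apply]

theorem relu_no_two_incongruent_lengths_general (p m₁ m₂ : ℕ) (hp : 2 ≤ p)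
    (hmod : m₁ % p ≠ m₂ % p) :
    ¬ ∃ (d : ℕ) (W : Fin d → Fin p → ℝ) (V : Fin p → Fin d → ℝ),
        ∀ x : Fin p → ℕ, ((∑ r, x r) = m₁ ∨ (∑ r, x r) = m₂) →
          ∃ ℓ : Fin p, (ℓ : ℕ) = lab p x ∧
            ∀ k : Fin p, k ≠ ℓ → reluScore W V x k < reluScore W V x ℓ := by
  rintro ⟨d, W, V, hclass⟩
  let one : Fin p := ⟨1, hp⟩
  have argmax_of_length (m : ℕ) (hm : m = m₁ ∨ m = m₂) : ∃ ℓ : Fin p, (ℓ : ℕ) = m % p ∧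
      IsStrictArgmax (reluScore W V (Pi.single one 1)) ℓ := by
    obtain ⟨ℓ, hℓ, hmax⟩ := hclass (Pi.single one m) (by simpa using hm)
    refine ⟨ℓ, by rw [hℓ, lab_single, one_mul], IsStrictArgmax.of_mul m.cast_nonneg ?_⟩
    have hsmul : (Pi.single one m : Fin p → ℕ) = m • Pi.single one 1 := by
      rw [← Pi.single_smul, smul_eq_mul, mul_one]
    simp only [hsmul, reluScore_nsmul] at hmax
    exact hmax
  obtain ⟨ℓ₁, hℓ₁, hmax₁⟩ := argmax_of_length m₁ (Or.inl rfl)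
  obtain ⟨ℓ₂, hℓ₂, hmax₂⟩ := argmax_of_length m₂ (Or.inr rfl)
  exact hmod (by rw [← hℓ₁, ← hℓ₂, hmax₁.unique hmax₂])

theorem relu_no_two_incongruent_lengths (p m₁ m₂ : ℕ) (hp : 2 ≤ p)
    (h₁ : 1 ≤ m₁) (h₂ : 1 ≤ m₂) (hmod : m₁ % p ≠ m₂ % p) :
    ¬ ∃ (d : ℕ) (W : Fin d → Fin p → ℝ) (V : Fin p → Fin d → ℝ),
        ∀ x : Fin p → ℕ, ((∑ r, x r) = m₁ ∨ (∑ r, x r) = m₂) →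
          ∃ ℓ : Fin p, (ℓ : ℕ) = lab p x ∧
            ∀ k : Fin p, k ≠ ℓ → reluScore W V x k < reluScore W V x ℓ :=
  relu_no_two_incongruent_lengths_general p m₁ m₂ hp hmod
end

section
/- For an integer m ≥ 1, let 𝒦_m = {k = (k₁,…,k_m) ∈ ℤ_{≥0}^m : Σ_{j=1}^m j·k_j = m} and define N_tot(m) = Σ_{k ∈ 𝒦_m} 2^{|k|} · ∏_{j=1}^m (k_j + 1), where |k| = Σ_{j=1}^m k_j. Then m·2^m ≤ N_tot(m) ≤ 13·m·2^m. -/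
/-- `Ntot m = Σ_{k ∈ 𝒦_m} 2^{|k|} · ∏_{j=1}^m (k_j + 1)`, where `𝒦_m` indexes the
partitions of `m` (with `k_j` the multiplicity of the part `j`), `|k| = Σ_j k_j`
is the total number of parts. -/
def Ntot (m : ℕ) : ℕ :=
  ∑ P : Nat.Partition m,
    2 ^ (Multiset.card P.parts) *
      ∏ j ∈ Finset.Icc 1 m, (Multiset.count j P.parts + 1)

/-!
Write `k_j` for the multiplicity of the part `j`. Since `m = |k| + ∑_{j ≥ 2} (j - 1) k_j`, the term
of a partition equals `2^m (k_1 + 1) ∏_{j ≥ 2} (k_j + 1) x_j^{k_j}` with `x_j = 2^{-(j-1)}`.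
The partition into ones alone contributes `(m + 1) 2^m`, which gives the lower bound. Every other
partition has `k_1 + 1 ≤ m`, and it is determined by `(k_j)_{j ≥ 2}`; summing over all such tuples
factorises into `∏_{j ≥ 2} ∑_k (k + 1) x_j^k ≤ ∏_{j ≥ 2} (1 - x_j)^{-2} ≤ 25/2`, whence
`N_tot(m) ≤ 2^m (25 m / 2 + 1) ≤ 13 m 2^m` for `m ≥ 2`.
-/

open Finset

lemma sum_range_succ_mul_pow_le {r : ℝ} (h0 : 0 ≤ r) (h1 : r < 1) (n : ℕ) :
    ∑ k ∈ range n, ((k : ℝ) + 1) * r ^ k ≤ ((1 - r) ^ 2)⁻¹ := by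
  have hs := hasSum_choose_mul_geometric_of_norm_lt_one 1 (r := r)
    (by rwa [Real.norm_of_nonneg h0])
  simp only [Nat.choose_one_right, Nat.cast_add, Nat.cast_one, one_div, one_add_one_eq_two] at hs
  exact sum_le_hasSum _ (fun k _ => by positivity) hs

lemma sum_piFinset_prod_succ_mul_pow_le {ι : Type*} [Fintype ι] [DecidableEq ι] {x : ι → ℝ}
    (h0 : ∀ i, 0 ≤ x i) (h1 : ∀ i, x i < 1) (n : ℕ) :
    ∑ c ∈ Fintype.piFinset (fun _ : ι => range n), ∏ i, ((c i + 1 : ℝ) * x i ^ c i) ≤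
      ∏ i, ((1 - x i) ^ 2)⁻¹ := by
  rw [← prod_univ_sum (fun _ => range n) fun i k => ((k : ℝ) + 1) * x i ^ k]
  exact prod_le_prod (fun i _ => sum_nonneg fun k _ => by have := h0 i; positivity)
    fun i _ => sum_range_succ_mul_pow_le (h0 i) (h1 i) n

lemma le_prod_range_one_sub_half_pow (n : ℕ) :
    (147 / 512 : ℝ) ≤ ∏ i ∈ range n, (1 - 2⁻¹ ^ (i + 1)) := by
  -- `E n * (1 - 2⁻¹ ^ n)` increases since `(1 - t / 2) ^ 2 ≥ 1 - t`,
  -- and it equals `147 / 512` at `n = 3`.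
  set E : ℕ → ℝ := fun n => ∏ i ∈ range n, (1 - 2⁻¹ ^ (i + 1)) with hE
  have hE0 : ∀ n, 0 ≤ E n := fun n =>
    prod_nonneg fun i _ => sub_nonneg.2 (pow_le_one₀ (by norm_num) (by norm_num))
  have hE_anti : Antitone E := antitone_nat_of_succ_le fun n => by
    simp only [hE, prod_range_succ]
    exact mul_le_of_le_one_right (hE0 n) (sub_le_self _ (by positivity))
  have hF_mono : Monotone fun n => E n * (1 - 2⁻¹ ^ n) := monotone_nat_of_le_succ fun n => by
    simp only [hE, prod_range_succ, pow_succ, mul_assoc]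
    exact mul_le_mul_of_nonneg_left (by nlinarith [sq_nonneg ((2 : ℝ)⁻¹ ^ n)]) (hE0 n)
  show 147 / 512 ≤ E n
  rcases le_total n 3 with h | h
  · calc (147 / 512 : ℝ) ≤ E 3 := by norm_num [hE, prod_range_succ]
      _ ≤ E n := hE_anti h
  · calc (147 / 512 : ℝ) = E 3 * (1 - 2⁻¹ ^ 3) := by norm_num [hE, prod_range_succ]
      _ ≤ E n * (1 - 2⁻¹ ^ n) := hF_mono h
      _ ≤ E n := mul_le_of_le_one_right (hE0 n) (sub_le_self _ (by positivity))

lemma prod_Icc_inv_one_sub_half_pow_sq_le (m : ℕ) :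
    ∏ j ∈ Icc 2 m, ((1 - 2⁻¹ ^ (j - 1) : ℝ) ^ 2)⁻¹ ≤ 25 / 2 := by
  have hshift : ∏ j ∈ Icc 2 m, (1 - 2⁻¹ ^ (j - 1) : ℝ) =
      ∏ i ∈ range (m - 1), (1 - 2⁻¹ ^ (i + 1)) := by
    rw [← Ico_add_one_right_eq_Icc, prod_Ico_eq_prod_range, show m + 1 - 2 = m - 1 by omega]
    exact prod_congr rfl fun i _ => by rw [show 2 + i - 1 = i + 1 by omega]
  have h := le_prod_range_one_sub_half_pow (m - 1)
  rw [prod_inv_distrib, prod_pow, hshift, inv_le_comm₀ (by positivity) (by norm_num)]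
  nlinarith

noncomputable def weightFromTwo {m : ℕ} (c : Icc 2 m → ℕ) : ℝ :=
  ∏ j, ((c j + 1 : ℝ) * (2⁻¹ ^ ((j : ℕ) - 1)) ^ c j)

lemma weightFromTwo_nonneg {m : ℕ} (c : Icc 2 m → ℕ) : 0 ≤ weightFromTwo c :=
  prod_nonneg fun _ _ => by positivity

lemma weightFromTwo_zero {m : ℕ} : weightFromTwo (0 : Icc 2 m → ℕ) = 1 := by
  simp [weightFromTwo]

lemma sum_piFinset_weightFromTwo_le (m n : ℕ) :
    ∑ c ∈ Fintype.piFinset (fun _ : Icc 2 m => range n), weightFromTwo c ≤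
      ∏ j ∈ Icc 2 m, ((1 - 2⁻¹ ^ (j - 1) : ℝ) ^ 2)⁻¹ := by
  rw [← prod_coe_sort]
  refine sum_piFinset_prod_succ_mul_pow_le (fun _ => by positivity) (fun j => ?_) n
  exact pow_lt_one₀ (by norm_num) (by norm_num) (by have := (mem_Icc.1 j.2).1; omega)

namespace Nat.Partition

variable {m : ℕ} (P : m.Partition)

lemma mem_Icc_of_mem_parts {j : ℕ} (hj : j ∈ P.parts) : j ∈ Icc 1 m :=
  mem_Icc.2 ⟨P.parts_pos hj, le_of_mem_parts hj⟩

lemma sum_count_mul_of_subset {s : Finset ℕ} (hs : ∀ j ∈ P.parts, j ∈ s) :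
    ∑ j ∈ s, P.parts.count j * j = m := by
  simpa [P.parts_sum] using
    (sum_multiset_count_of_subset P.parts s fun j hj => hs j (Multiset.mem_toFinset.1 hj)).symm

lemma count_one_add_sum_count_mul :
    P.parts.count 1 + ∑ j ∈ Icc 2 m, P.parts.count j * j = m := by
  have h := P.sum_count_mul_of_subset (s := insert 1 (Icc 2 m)) fun j hj => by
    have := mem_Icc.1 (P.mem_Icc_of_mem_parts hj)
    simp only [mem_insert, mem_Icc]
    omega
  rwa [sum_insert (by simp), mul_one] at h

def countsFromTwo : Icc 2 m → ℕ := fun j => P.parts.count (j : ℕ)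

lemma countsFromTwo_le (j : Icc 2 m) : P.countsFromTwo j ≤ m := by
  have h := single_le_sum (f := fun i => P.parts.count i * i) (fun _ _ => Nat.zero_le _) j.2
  have := P.count_one_add_sum_count_mul
  have := (mem_Icc.1 j.2).1
  simp only [countsFromTwo]
  nlinarith

lemma count_one_add_two_le (h : P.countsFromTwo ≠ 0) : P.parts.count 1 + 2 ≤ m := by
  obtain ⟨j, hj⟩ := Function.ne_iff.1 h
  have h := single_le_sum (f := fun i => P.parts.count i * i) (fun _ _ => Nat.zero_le _) j.2
  have := P.count_one_add_sum_count_mul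
  have := (mem_Icc.1 j.2).1
  simp only [countsFromTwo, Pi.zero_apply] at hj h
  nlinarith [Nat.one_le_iff_ne_zero.2 hj]

lemma countsFromTwo_injective : Function.Injective (countsFromTwo (m := m)) := by
  intro P Q hPQ
  have hcount : ∀ j ∈ Icc 2 m, P.parts.count j = Q.parts.count j := fun j hj =>
    congrFun hPQ ⟨j, hj⟩
  have hone : P.parts.count 1 = Q.parts.count 1 := by
    have hP := P.count_one_add_sum_count_mul
    have hQ := Q.count_one_add_sum_count_mul
    rw [sum_congr rfl fun j hj => by rw [hcount j hj]] at hP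
    omega
  refine Nat.Partition.ext (Multiset.ext.2 fun j => ?_)
  by_cases hj : j ∈ Icc 1 m
  · rcases (mem_Icc.1 hj).1.eq_or_lt with rfl | h2
    · exact hone
    · exact hcount j (mem_Icc.2 ⟨h2, (mem_Icc.1 hj).2⟩)
  · rw [Multiset.count_eq_zero_of_notMem fun h => hj (P.mem_Icc_of_mem_parts h),
      Multiset.count_eq_zero_of_notMem fun h => hj (Q.mem_Icc_of_mem_parts h)]

lemma two_pow_card_mul_prod_eq (hm : 1 ≤ m) :
    ((2 ^ Multiset.card P.parts * ∏ j ∈ Icc 1 m, (P.parts.count j + 1) : ℕ) : ℝ) =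
      2 ^ m * ((P.parts.count 1 + 1) * weightFromTwo P.countsFromTwo) := by
  have hsub : ∀ j ∈ P.parts, j ∈ Icc 1 m := fun j => P.mem_Icc_of_mem_parts
  calc ((2 ^ Multiset.card P.parts * ∏ j ∈ Icc 1 m, (P.parts.count j + 1) : ℕ) : ℝ)
      = ∏ j ∈ Icc 1 m, (2 : ℝ) ^ P.parts.count j * (P.parts.count j + 1) := by
        rw [← Multiset.sum_count_eq_card hsub, prod_mul_distrib, prod_pow_eq_pow_sum]
        push_cast
        rfl
    _ = ∏ j ∈ Icc 1 m, (2 : ℝ) ^ (P.parts.count j * j) *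
          ((P.parts.count j + 1) * (2⁻¹ ^ (j - 1)) ^ P.parts.count j) := by
        refine prod_congr rfl fun j hj => ?_
        obtain ⟨i, rfl⟩ := Nat.exists_eq_add_of_le' (mem_Icc.1 hj).1
        rw [Nat.add_sub_cancel, inv_pow, inv_pow, ← pow_mul, mul_add_one, pow_add, mul_comm i]
        field_simp
    _ = 2 ^ m * ∏ j ∈ Icc 1 m,
          ((P.parts.count j + 1 : ℝ) * (2⁻¹ ^ (j - 1)) ^ P.parts.count j) := by
        rw [prod_mul_distrib, prod_pow_eq_pow_sum, P.sum_count_mul_of_subset hsub]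
    _ = _ := by
        rw [← insert_Icc_add_one_left_eq_Icc hm, prod_insert (by simp), Nat.sub_self, pow_zero,
          one_pow, mul_one, weightFromTwo, ← prod_coe_sort]
        rfl

lemma succ_count_one_mul_weightFromTwo_le :
    (P.parts.count 1 + 1 : ℝ) * weightFromTwo P.countsFromTwo ≤
      m * weightFromTwo P.countsFromTwo + if P.countsFromTwo = 0 then 1 else 0 := by
  split_ifs with h
  · have : P.parts.count 1 ≤ m := by have := P.count_one_add_sum_count_mul; omega
    rw [h, weightFromTwo_zero]
    simpa using (Nat.cast_le (α := ℝ)).2 this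
  · have : (P.parts.count 1 + 1 : ℝ) ≤ m := by
      exact_mod_cast (by have := P.count_one_add_two_le h; omega : P.parts.count 1 + 1 ≤ m)
    nlinarith [weightFromTwo_nonneg P.countsFromTwo]

def ones (m : ℕ) : m.Partition where
  parts := Multiset.replicate m 1
  parts_pos hi := by rw [Multiset.eq_of_mem_replicate hi]; exact one_pos
  parts_sum := by simp

end Nat.Partition

section

variable {m : ℕ}

lemma two_pow_mul_succ_le_Ntot (hm : 1 ≤ m) : 2 ^ m * (m + 1) ≤ Ntot m := by
  let w : m.Partition → ℕ := fun P =>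
    2 ^ Multiset.card P.parts * ∏ j ∈ Icc 1 m, (P.parts.count j + 1)
  calc 2 ^ m * (m + 1) ≤ w (.ones m) := by
        have h := single_le_prod' (f := fun j => (Nat.Partition.ones m).parts.count j + 1)
          (fun _ _ => Nat.le_add_left 1 _) (mem_Icc.2 ⟨le_rfl, hm⟩)
        simpa [w, Nat.Partition.ones] using Nat.mul_le_mul_left (2 ^ m) h
    _ ≤ Ntot m := single_le_sum (f := w) (fun _ _ => Nat.zero_le _) (mem_univ _)

lemma Ntot_le (hm : 1 ≤ m) :
    (Ntot m : ℝ) ≤ 2 ^ m * (m * ∏ j ∈ Icc 2 m, ((1 - 2⁻¹ ^ (j - 1) : ℝ) ^ 2)⁻¹ + 1) := by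
  classical
  let S := Fintype.piFinset fun _ : Icc 2 m => range (m + 1)
  let F : (Icc 2 m → ℕ) → ℝ := fun c => 2 ^ m * (m * weightFromTwo c + if c = 0 then 1 else 0)
  have hS : ∀ P : m.Partition, P.countsFromTwo ∈ S := fun P =>
    Fintype.mem_piFinset.2 fun j => mem_range.2 (Nat.lt_succ_of_le (P.countsFromTwo_le j))
  calc (Ntot m : ℝ)
      = ∑ P : m.Partition, 2 ^ m * ((P.parts.count 1 + 1) * weightFromTwo P.countsFromTwo) := by
        rw [Ntot, Nat.cast_sum]
        exact sum_congr rfl fun P _ => P.two_pow_card_mul_prod_eq hm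
    _ ≤ ∑ P : m.Partition, F P.countsFromTwo := by
        gcongr with P
        exact mul_le_mul_of_nonneg_left P.succ_count_one_mul_weightFromTwo_le (by positivity)
    _ = ∑ c ∈ univ.image Nat.Partition.countsFromTwo, F c :=
        (sum_image Nat.Partition.countsFromTwo_injective.injOn).symm
    _ ≤ ∑ c ∈ S, F c :=
        sum_le_sum_of_subset_of_nonneg (image_subset_iff.2 fun P _ => hS P) fun c _ _ => by
          have := weightFromTwo_nonneg c
          simp only [F]
          split_ifs <;> positivity
    _ = 2 ^ m * (m * ∑ c ∈ S, weightFromTwo c + 1) := by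
        rw [← mul_sum, sum_add_distrib, ← mul_sum, sum_ite_eq' S 0,
          if_pos (show (0 : Icc 2 m → ℕ) ∈ S from
            Fintype.mem_piFinset.2 fun _ => mem_range.2 (Nat.succ_pos m))]
    _ ≤ _ := by gcongr; exact sum_piFinset_weightFromTwo_le m (m + 1)

end

theorem Ntot_bounds (m : ℕ) (hm : 1 ≤ m) :
    m * 2 ^ m ≤ Ntot m ∧ Ntot m ≤ 13 * m * 2 ^ m := by
  refine ⟨?_, ?_⟩
  · calc m * 2 ^ m ≤ 2 ^ m * (m + 1) := by rw [mul_comm]; exact Nat.mul_le_mul_left _ m.le_succ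
      _ ≤ Ntot m := two_pow_mul_succ_le_Ntot hm
  · suffices h : (m : ℝ) * ∏ j ∈ Icc 2 m, ((1 - 2⁻¹ ^ (j - 1) : ℝ) ^ 2)⁻¹ + 1 ≤ 13 * m by
      have hNtot : (Ntot m : ℝ) ≤ 13 * m * 2 ^ m :=
        (Ntot_le hm).trans (by nlinarith [pow_pos (two_pos (α := ℝ)) m])
      exact_mod_cast hNtot
    rcases hm.eq_or_lt with rfl | hm2
    · norm_num
    · have hQ := prod_Icc_inv_one_sub_half_pow_sq_le m
      have : (2 : ℝ) ≤ m := by exact_mod_cast hm2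
      nlinarith
end

section
/- Let m ≥ 2 and p ≥ 2 be integers. There exist matrices W ∈ ℝ^{2p×p} and V ∈ ℝ^{p×2p} such that, for every x ∈ X_m, the two-layer sine network scores s(x) = V·sin(Wx) satisfy s_q(x) = p if q = y(x) and s_q(x) = 0 otherwise; hence the unique-argmax predictor outputs y(x) with margin exactly p on every input. Moreover every entry of W has absolute value at most π (so ‖W‖_F ≤ π√2·p), every entry of V has absolute value at most 1, and V·Vᵀ = p·I_p (so ‖V‖₂ = √p). -/
open Matrix

/-! The hidden units are indexed by `(i, k) : Fin 2 × Fin p`: unit `(0, k)` computes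
`sin (2πkN/p)` and unit `(1, k)` computes `cos (2πkN/p)`, where `N = ∑ r, r x_r`. The cosine is
a sine whose per-token phase `π/(2m)` adds up to `π/2`, because every input has exactly `m` tokens.
Taking as output weights the same features evaluated at `q`, the angle-subtraction formula turns
the score into `∑ k, cos (2πk(N - q)/p)`, a sum over the `p`-th roots of unity, which is `p` when
`q ≡ N [MOD p]` and `0` otherwise; the same orthogonality gives `V Vᵀ = p • 1`. Since inputs are
integer vectors, first-layer weights may be reduced modulo `2π` into `(-π, π]`. -/

open Real Finset

lemma sum_range_cos_two_pi_mul_div {p : ℕ} (hp : 0 < p) (n : ℤ) :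
    ∑ k ∈ range p, cos (2 * π * k * n / p) = if (p : ℤ) ∣ n then (p : ℝ) else 0 := by
  set ζ := Complex.exp (2 * π * Complex.I / p)
  have hζ : IsPrimitiveRoot ζ p := Complex.isPrimitiveRoot_exp p hp.ne'
  have hcos (k : ℕ) : cos (2 * π * k * n / p) = ((ζ ^ n) ^ k).re := by
    rw [← zpow_natCast, ← _root_.zpow_mul, ← Complex.exp_int_mul, ← Complex.exp_ofReal_mul_I_re]
    push_cast
    ring_nf
  rw [sum_congr rfl fun k _ => hcos k, ← Complex.re_sum]
  split_ifs with hdvd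
  · simp [(hζ.zpow_eq_one_iff_dvd n).mpr hdvd]
  · rw [geom_sum_eq (mt (hζ.zpow_eq_one_iff_dvd n).mp hdvd), ← zpow_natCast, ← _root_.zpow_mul,
      mul_comm, _root_.zpow_mul, zpow_natCast, hζ.pow_eq_one]
    simp

lemma sin_toReal_sum_mul {ι : Type*} [Fintype ι] (θ : ι → ℝ) (x : ι → ℕ) :
    sin (∑ r, (θ r : Angle).toReal * x r) = sin (∑ r, θ r * x r) := by
  rw [← Angle.sin_coe, ← Angle.sin_coe (∑ r, θ r * x r)]
  congr 1
  simp only [← Angle.coe_coeHom, map_sum, mul_comm _ (x _ : ℝ), ← nsmul_eq_mul, map_nsmul]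
  simp only [Angle.coe_coeHom, Angle.coe_toReal]

lemma sum_sum_sq_le_of_abs_le {ι κ : Type*} [Fintype ι] [Fintype κ] {A : ι → κ → ℝ} {c : ℝ}
    (h : ∀ i j, |A i j| ≤ c) :
    ∑ i, ∑ j, A i j ^ 2 ≤ Fintype.card ι * Fintype.card κ * c ^ 2 := by
  calc ∑ i, ∑ j, A i j ^ 2 ≤ ∑ _i : ι, ∑ _j : κ, c ^ 2 :=
        sum_le_sum fun i _ => sum_le_sum fun j _ => sq_le_sq.mpr ((h i j).trans (le_abs_self c))
    _ = _ := by simp [mul_assoc]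

lemma lab_modEq (p : ℕ) (x : Fin p → ℕ) : lab p x ≡ ∑ r : Fin p, (r : ℕ) * x r [MOD p] :=
  Nat.mod_modEq _ p

lemma Fin.val_modEq_val_iff {p : ℕ} {q q' : Fin p} : (q : ℕ) ≡ q' [MOD p] ↔ q = q' := by
  rw [Nat.ModEq, Nat.mod_eq_of_lt q.isLt, Nat.mod_eq_of_lt q'.isLt, Fin.val_inj]

noncomputable def fourierFeature (p : ℕ) (a : ℝ) (j : Fin 2 × Fin p) : ℝ :=
  sin (2 * π * j.2 * a / p + j.1 * (π / 2))

lemma sum_fourierFeature_mul {p : ℕ} (hp : 0 < p) (a b : ℕ) :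
    ∑ j, fourierFeature p a j * fourierFeature p b j = if a ≡ b [MOD p] then (p : ℝ) else 0 := by
  have hpair (k : Fin p) : ∑ i : Fin 2, fourierFeature p a (i, k) * fourierFeature p b (i, k) =
      cos (2 * π * (k : ℕ) * ((b : ℤ) - a : ℤ) / p) := by
    simp only [fourierFeature, Fin.sum_univ_two, Fin.val_zero, Fin.val_one]
    push_cast
    rw [mul_sub, sub_div, cos_sub]
    simp only [zero_mul, add_zero, one_mul, sin_add_pi_div_two]
    ring_nf
  rw [Fintype.sum_prod_type_right, sum_congr rfl fun k _ => hpair k,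
    Fin.sum_univ_eq_sum_range (fun k => cos (2 * π * k * ((b : ℤ) - a : ℤ) / p)),
    sum_range_cos_two_pi_mul_div hp]
  simp only [Nat.modEq_iff_dvd]

noncomputable def firstLayer (m p : ℕ) (j : Fin 2 × Fin p) (r : Fin p) : ℝ :=
  2 * π * j.2 * r / p + j.1 * (π / 2) / m

lemma sin_sum_firstLayer_mul {m p : ℕ} (hm : m ≠ 0) {x : Fin p → ℕ} (hx : ∑ r, x r = m)
    (j : Fin 2 × Fin p) :
    sin (∑ r, firstLayer m p j r * x r) = fourierFeature p (∑ r : Fin p, (r : ℕ) * x r : ℕ) j := by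
  have hxR : ∑ r, (x r : ℝ) = m := by exact_mod_cast hx
  have hmR : (m : ℝ) ≠ 0 := Nat.cast_ne_zero.mpr hm
  have hsum : ∑ r, firstLayer m p j r * x r =
      2 * π * j.2 / p * ∑ r : Fin p, (r : ℕ) * (x r : ℝ) + j.1 * (π / 2) / m * ∑ r, (x r : ℝ) := by
    simp only [firstLayer, mul_sum, ← sum_add_distrib]
    exact sum_congr rfl fun r _ => by ring
  rw [hsum, hxR, fourierFeature]
  push_cast
  field_simp

noncomputable def modularW (m p : ℕ) (j : Fin (2 * p)) (r : Fin p) : ℝ :=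
  (firstLayer m p (finProdFinEquiv.symm j) r : Angle).toReal

noncomputable def modularV (p : ℕ) (q : Fin p) (j : Fin (2 * p)) : ℝ :=
  fourierFeature p q (finProdFinEquiv.symm j)

lemma sineScore_modular {m p : ℕ} (hm : m ≠ 0) (hp : 0 < p) {x : Fin p → ℕ}
    (hx : ∑ r, x r = m) (q : Fin p) :
    sineScore (modularW m p) (modularV p) x q =
      if (q : ℕ) ≡ ∑ r : Fin p, (r : ℕ) * x r [MOD p] then (p : ℝ) else 0 := by
  rw [← sum_fourierFeature_mul hp, sineScore, ← finProdFinEquiv.sum_comp]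
  simp only [modularV, modularW, Equiv.symm_apply_apply, sin_toReal_sum_mul,
    sin_sum_firstLayer_mul hm hx]

lemma modularV_mul_transpose {p : ℕ} (hp : 0 < p) :
    of (modularV p) * (of (modularV p))ᵀ = (p : ℝ) • 1 := by
  ext q q'
  rw [mul_apply, ← finProdFinEquiv.sum_comp]
  simp only [transpose_apply, of_apply, modularV, Equiv.symm_apply_apply,
    sum_fourierFeature_mul hp, Fin.val_modEq_val_iff, Matrix.smul_apply, one_apply, smul_eq_mul,
    mul_boole]

theorem sine_high_margin_construction (m p : ℕ) (hm : 2 ≤ m) (hp : 2 ≤ p) :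
    ∃ (W : Fin (2 * p) → Fin p → ℝ) (V : Fin p → Fin (2 * p) → ℝ),
      (∀ x : Fin p → ℕ, (∑ r, x r) = m →
        ∃ ℓ : Fin p, (ℓ : ℕ) = lab p x ∧
          sineScore W V x ℓ = p ∧
          ∀ q : Fin p, q ≠ ℓ → sineScore W V x q = 0) ∧
      (∀ j r, |W j r| ≤ Real.pi) ∧
      Real.sqrt (∑ j, ∑ r, (W j r) ^ 2) ≤ Real.pi * Real.sqrt 2 * p ∧
      (∀ q j, |V q j| ≤ 1) ∧
      (Matrix.of V) * (Matrix.of V)ᵀ = (p : ℝ) • 1 := by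
  have hm0 : m ≠ 0 := by omega
  have hp0 : 0 < p := by omega
  have hW (j r) : |modularW m p j r| ≤ π := Angle.abs_toReal_le_pi _
  refine ⟨modularW m p, modularV p, fun x hx => ?_, hW, ?_, fun q j => abs_sin_le_one _,
    modularV_mul_transpose hp0⟩
  · refine ⟨⟨lab p x, Nat.mod_lt _ hp0⟩, rfl, ?_, fun q hq => ?_⟩
    · rw [sineScore_modular hm0 hp0 hx, if_pos (lab_modEq p x)]
    · rw [sineScore_modular hm0 hp0 hx, if_neg]
      exact fun h => hq (Fin.val_modEq_val_iff.mp (h.trans (lab_modEq p x).symm))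
  · rw [sqrt_le_iff]
    refine ⟨by positivity, (sum_sum_sq_le_of_abs_le hW).trans_eq ?_⟩
    simp only [Fintype.card_fin, mul_pow, sq_sqrt zero_le_two]
    push_cast
    ring
end
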